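/- Let φ: A → A' be a bijective unital multiplicative *-Lie-Jordan n-map between unital C*-algebras, and P₁ a nontrivial projection with P₂ = I - P₁. Then φ(AP_i) = φ(A)φ(P_i) and φ(P_iA) = φ(P_i)φ(A) for all A ∈ A and i ∈ {1,2}. -/
import Mathlib


def lieStar {R : Type*} [NonUnitalRing R] [StarRing R] (x y : R) : R := x * y - y * star x
def jordanStar {R : Type*} [NonUnitalRing R] [StarRing R] (x y : R) : R := x * y + y * star x
def pStar {R : Type*} [NonUnitalRing R] [StarRing R] (x : R) (l : List R) : R := l.foldl lieStar x
def qStar {R : Type*} [NonUnitalRing R] [StarRing R] (x : R) (l : List R) : R := l.foldl jordanStar x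

section helpers

variable {R : Type*} [Ring R] [StarRing R]

lemma pStar_cons (x a : R) (l : List R) : pStar x (a :: l) = pStar (lieStar x a) l := rfl
lemma qStar_cons (x a : R) (l : List R) : qStar x (a :: l) = qStar (jordanStar x a) l := rfl

lemma pStar_replicate_one_skew (k : ℕ) (s : R) (hs : star s = -s) :
    pStar s (List.replicate k 1) = (2 ^ k : ℕ) • s := by
  induction k generalizing s with
  | zero => simp [pStar]
  | succ k ih =>
    rw [List.replicate_succ, pStar_cons]
    have h1 : lieStar s 1 = s + s := by
      simp [lieStar, hs]
    rw [h1, ih (s + s) (by rw [star_add, hs]; abel)]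
    rw [← two_smul ℕ s, smul_smul, ← pow_succ]

lemma qStar_replicate_one_sa (k : ℕ) (s : R) (hs : star s = s) :
    qStar s (List.replicate k 1) = (2 ^ k : ℕ) • s := by
  induction k generalizing s with
  | zero => simp [qStar]
  | succ k ih =>
    rw [List.replicate_succ, qStar_cons]
    have h1 : jordanStar s 1 = s + s := by
      simp [jordanStar, hs]
    rw [h1, ih (s + s) (by rw [star_add, hs])]
    rw [← two_smul ℕ s, smul_smul, ← pow_succ]

lemma pStar_cons_replicate (k : ℕ) (x q : R) (hq : star q = q) :
    pStar x (q :: List.replicate k 1) = (2 ^ k : ℕ) • (x * q - q * star x) := by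
  rw [pStar_cons]
  show pStar (x * q - q * star x) _ = _
  refine pStar_replicate_one_skew k _ ?_
  rw [star_sub, star_mul, star_mul, star_star, hq]
  abel

lemma qStar_cons_replicate (k : ℕ) (x q : R) (hq : star q = q) :
    qStar x (q :: List.replicate k 1) = (2 ^ k : ℕ) • (x * q + q * star x) := by
  rw [qStar_cons]
  show qStar (x * q + q * star x) _ = _
  refine qStar_replicate_one_sa k _ ?_
  rw [star_add, star_mul, star_mul, star_star, hq]
  abel

end helpers

lemma starNsmul {M : Type*} [AddCommGroup M] [StarAddMonoid M] (m : ℕ) (x : M) :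
    star (m • x) = m • star x := by
  induction m with
  | zero => simp
  | succ k ih => rw [succ_nsmul, succ_nsmul, star_add, ih]

lemma nsmul_cancel {M : Type*} [AddCommGroup M] [Module ℂ M] {m : ℕ} (hm : m ≠ 0)
    {x y : M} (h : m • x = m • y) : x = y := by
  have hm' : (m : ℂ) ≠ 0 := Nat.cast_ne_zero.mpr hm
  have h' : (m : ℂ) • x = (m : ℂ) • y := by
    rw [Nat.cast_smul_eq_nsmul, Nat.cast_smul_eq_nsmul]; exact h
  calc x = (m:ℂ)⁻¹ • ((m:ℂ) • x) := (inv_smul_smul₀ hm' x).symm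
    _ = y := by rw [h', inv_smul_smul₀ hm' y]

lemma nsmul_cancel0 {M : Type*} [AddCommGroup M] [Module ℂ M] {m : ℕ} (hm : m ≠ 0)
    {x : M} (h : m • x = 0) : x = 0 :=
  nsmul_cancel hm (by rw [h, smul_zero])

lemma add_self_cancel {M : Type*} [AddCommGroup M] [Module ℂ M]
    {x y : M} (h : x + x = y + y) : x = y :=
  nsmul_cancel (two_ne_zero) (by rw [two_smul, two_smul]; exact h)

lemma add_self_cancel0 {M : Type*} [AddCommGroup M] [Module ℂ M]
    {x : M} (h : x + x = 0) : x = 0 :=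
  add_self_cancel (by rw [h, add_zero])

/-- φ(A P_i) = φ(A)φ(P_i) and φ(P_i A) = φ(P_i)φ(A). -/
theorem starLieJordanMap_mul_proj {A B : Type*} [NormedRing A] [StarRing A] [CStarRing A] [NormedAlgebra ℂ A] [CompleteSpace A] [StarModule ℂ A] [NormedRing B] [StarRing B] [CStarRing B] [NormedAlgebra ℂ B] [CompleteSpace B] [StarModule ℂ B]
    (n : ℕ) (hn : 2 ≤ n) (φ : A → B) (hbij : Function.Bijective φ) (hφ1 : φ 1 = 1)
    (hp : ∀ (x : A) (l : List A), l.length = n - 1 → φ (pStar x l) = pStar (φ x) (l.map φ))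
    (hq : ∀ (x : A) (l : List A), l.length = n - 1 → φ (qStar x l) = qStar (φ x) (l.map φ)) (P : A) (hPidem : P * P = P) (hPsa : star P = P) (hP0 : P ≠ 0) (hP1 : P ≠ 1)
    (Pi : A) (hi : Pi = P ∨ Pi = 1 - P) (a : A) :
    φ (a * Pi) = φ a * φ Pi ∧ φ (Pi * a) = φ Pi * φ a := by
  have hcn : (2 ^ (n-2) : ℕ) ≠ 0 := pow_ne_zero _ (by norm_num)
  -- key identities from the hypotheses
  have key_p : ∀ x q : A, star q = q → star (φ q) = φ q →
      φ ((2^(n-2) : ℕ) • (x * q - q * star x))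
        = (2^(n-2) : ℕ) • (φ x * φ q - φ q * star (φ x)) := by
    intro x q hqsa hq'
    have hlen : (q :: List.replicate (n-2) (1 : A)).length = n - 1 := by
      simp only [List.length_cons, List.length_replicate]; omega
    have h := hp x _ hlen
    rw [pStar_cons_replicate _ _ _ hqsa] at h
    rw [List.map_cons, List.map_replicate, hφ1] at h
    rw [pStar_cons_replicate _ _ _ hq'] at h
    exact h
  have key_q : ∀ x q : A, star q = q → star (φ q) = φ q →
      φ ((2^(n-2) : ℕ) • (x * q + q * star x))
        = (2^(n-2) : ℕ) • (φ x * φ q + φ q * star (φ x)) := by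
    intro x q hqsa hq'
    have hlen : (q :: List.replicate (n-2) (1 : A)).length = n - 1 := by
      simp only [List.length_cons, List.length_replicate]; omega
    have h := hq x _ hlen
    rw [qStar_cons_replicate _ _ _ hqsa] at h
    rw [List.map_cons, List.map_replicate, hφ1] at h
    rw [qStar_cons_replicate _ _ _ hq'] at h
    exact h
  have key_p1 : ∀ x : A, φ ((2^(n-2) : ℕ) • (x - star x))
      = (2^(n-2):ℕ) • (φ x - star (φ x)) := by
    intro x
    have h := key_p x 1 (star_one A) (by rw [hφ1]; exact star_one B)
    simpa [hφ1] using h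
  have key_q1 : ∀ x : A, φ ((2^(n-2) : ℕ) • (x + star x))
      = (2^(n-2):ℕ) • (φ x + star (φ x)) := by
    intro x
    have h := key_q x 1 (star_one A) (by rw [hφ1]; exact star_one B)
    simpa [hφ1] using h
  -- φ 0 = 0
  obtain ⟨e, he⟩ := hbij.surjective 0
  have hφ0 : φ 0 = 0 := by
    have hp_e : φ ((2^(n-2):ℕ) • (e - star e)) = 0 := by rw [key_p1 e, he]; simp
    have hq_e : φ ((2^(n-2):ℕ) • (e + star e)) = 0 := by rw [key_q1 e, he]; simp
    have h1 : (2^(n-2):ℕ) • (e - star e) = e := hbij.injective (by rw [hp_e, he])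
    have h2 : (2^(n-2):ℕ) • (e + star e) = e := hbij.injective (by rw [hq_e, he])
    have h3 : (2^(n-2):ℕ) • ((e + star e) - (e - star e)) = 0 := by
      rw [smul_sub, h1, h2, sub_self]
    have h4 : (2^(n-2):ℕ) • (star e + star e) = 0 := by
      rw [show star e + star e = (e + star e) - (e - star e) by abel]; exact h3
    have h5 : star e + star e = 0 := nsmul_cancel0 hcn h4
    have h6 : star e = 0 := add_self_cancel0 h5
    have he0 : e = 0 := star_eq_zero.mp h6
    rw [← he0, he]
  -- φ preserves self-adjoint and skew elements
  have sa_pres : ∀ h : A, star h = h → star (φ h) = φ h := by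
    intro h hsa
    have h1 := key_p1 h
    rw [hsa, sub_self, smul_zero, hφ0] at h1
    have h2 : φ h - star (φ h) = 0 := nsmul_cancel0 hcn h1.symm
    exact (sub_eq_zero.mp h2).symm
  have skew_pres : ∀ u : A, star u = -u → star (φ u) = -φ u := by
    intro u hsk
    have h1 := key_q1 u
    rw [hsk, add_neg_cancel, smul_zero, hφ0] at h1
    have h2 : φ u + star (φ u) = 0 := nsmul_cancel0 hcn h1.symm
    exact eq_neg_of_add_eq_zero_right h2
  -- φ (-1) = -1
  obtain ⟨r, hr⟩ := hbij.surjective (-1)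
  have hrB : star (φ r) = φ r := by rw [hr]; simp
  have hrsa : star r = r := by
    have h1 := key_p1 r
    rw [hr] at h1
    simp only [star_neg, star_one, sub_neg_eq_add, neg_add_cancel, smul_zero] at h1
    have h2 : (2^(n-2):ℕ) • (r - star r) = 0 := hbij.injective (by rw [h1, hφ0])
    have h3 : r - star r = 0 := nsmul_cancel0 hcn h2
    exact (sub_eq_zero.mp h3).symm
  have hrr : r * r = 1 := by
    have hA := key_q r r hrsa hrB
    rw [hrsa, hr] at hA
    simp only [star_neg, star_one, mul_neg, mul_one, neg_neg, neg_mul, one_mul] at hA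
    have h11 : φ ((2^(n-2):ℕ) • ((1:A) + 1)) = (2^(n-2):ℕ) • ((1:B) + 1) := by
      have h := key_q 1 1 (star_one A) (by rw [hφ1]; exact star_one B)
      simpa [hφ1] using h
    have h12 : (2^(n-2):ℕ) • (r * r + r * r) = (2^(n-2):ℕ) • ((1:A) + 1) :=
      hbij.injective (by rw [hA, h11])
    have h13 : r * r + r * r = (1:A) + 1 := nsmul_cancel hcn h12
    exact add_self_cancel h13
  have hrneg : r = -1 := by
    have hh'sa : star (1 + r) = 1 + r := by rw [star_add, star_one, hrsa]
    have hrh' : r * (1 + r) = 1 + r := by rw [mul_add, mul_one, hrr, add_comm]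
    have hh'r : (1 + r) * r = 1 + r := by rw [add_mul, one_mul, hrr, add_comm]
    have hφh'sa := sa_pres _ hh'sa
    have hA := key_q (1 + r) r hrsa hrB
    rw [hh'sa, hrh', hh'r, hr, hφh'sa] at hA
    simp only [mul_neg, mul_one, neg_mul, one_mul] at hA
    have hB := key_q1 (1 + r)
    rw [hh'sa, hφh'sa] at hB
    have hC : (2^(n-2):ℕ) • (φ (1+r) + φ (1+r))
        = (2^(n-2):ℕ) • (-φ (1+r) + -φ (1+r)) := by rw [← hB, hA]
    have hD : φ (1+r) + φ (1+r) = -φ (1+r) + -φ (1+r) := nsmul_cancel hcn hC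
    have hE : φ (1+r) = -φ (1+r) := add_self_cancel hD
    have hF : φ (1+r) + φ (1+r) = 0 := by nth_rewrite 2 [hE]; exact add_neg_cancel _
    have hG : φ (1+r) = 0 := add_self_cancel0 hF
    have hH : (1:A) + r = 0 := hbij.injective (by rw [hG, hφ0])
    exact eq_neg_of_add_eq_zero_right hH
  have hφneg1 : φ (-1) = -1 := by rw [← hrneg]; exact hr
  -- oddness on skew elements
  have odd_skew : ∀ u : A, star u = -u → φ (-u) = -φ u := by
    intro u hu
    have hmne : ((2^(n-2) * 2 : ℕ) : ℂ) ≠ 0 :=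
      Nat.cast_ne_zero.mpr (mul_ne_zero hcn two_ne_zero)
    set w : A := (((2^(n-2) * 2 : ℕ) : ℂ))⁻¹ • u with hw
    have hstarinv : star ((((2^(n-2) * 2 : ℕ) : ℂ))⁻¹) = (((2^(n-2) * 2 : ℕ) : ℂ))⁻¹ := by
      simp
    have hwskew : star w = -w := by
      rw [hw, star_smul, hstarinv, hu, smul_neg]
    have hmw : (2^(n-2) * 2 : ℕ) • w = u := by
      rw [hw, ← Nat.cast_smul_eq_nsmul ℂ, smul_inv_smul₀ hmne]
    have hφw := skew_pres w hwskew
    have hA := key_p w (-1) (by simp) (by rw [hφneg1]; simp)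
    rw [hφneg1] at hA
    have e1 : w * (-1) - (-1) * star w = -(w + w) := by
      rw [hwskew, mul_neg_one, neg_one_mul, neg_neg]; abel
    have e2 : φ w * (-1) - (-1) * star (φ w) = -(φ w + φ w) := by
      rw [hφw, mul_neg_one, neg_one_mul, neg_neg]; abel
    rw [e1, e2] at hA
    have e3 : (2^(n-2):ℕ) • (-(w + w)) = -u := by
      rw [smul_neg, ← two_smul ℕ w, smul_smul, hmw]
    have e4 : (2^(n-2):ℕ) • (-(φ w + φ w)) = -((2^(n-2) * 2 : ℕ) • φ w) := by
      rw [smul_neg, ← two_smul ℕ (φ w), smul_smul]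
    rw [e3, e4] at hA
    -- hA : φ (-u) = -((2^(n-2)*2) • φ w)
    have hB := key_p w 1 (star_one A) (by rw [hφ1]; exact star_one B)
    simp only [hφ1, mul_one, one_mul] at hB
    rw [hwskew, sub_neg_eq_add] at hB
    have e5 : (2^(n-2):ℕ) • (w + w) = u := by
      rw [← two_smul ℕ w, smul_smul, hmw]
    have e6 : (2^(n-2):ℕ) • (φ w - star (φ w)) = (2^(n-2) * 2 : ℕ) • φ w := by
      rw [hφw, sub_neg_eq_add, ← two_smul ℕ (φ w), smul_smul]
    rw [e5, e6] at hB
    rw [hA, hB]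
  -- star preservation
  have star_pres : ∀ a : A, φ (star a) = star (φ a) := by
    intro a
    have hskew : star ((2^(n-2):ℕ) • (a - star a)) = -((2^(n-2):ℕ) • (a - star a)) := by
      rw [starNsmul, ← smul_neg]
      congr 1
      rw [star_sub, star_star]; abel
    have hA := key_p1 (star a)
    rw [star_star] at hA
    have e1 : (2^(n-2):ℕ) • (star a - a) = -((2^(n-2):ℕ) • (a - star a)) := by
      rw [← smul_neg]; congr 1; abel
    rw [e1, odd_skew _ hskew, key_p1 a] at hA
    have hB := key_q1 (star a)
    rw [star_star] at hB
    have e2 : (2^(n-2):ℕ) • (star a + a) = (2^(n-2):ℕ) • (a + star a) := by rw [add_comm]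
    rw [e2, key_q1 a] at hB
    have hsum : (2^(n-2):ℕ) • (φ (star a) + φ (star a))
        = (2^(n-2):ℕ) • (star (φ a) + star (φ a)) := by
      calc (2^(n-2):ℕ) • (φ (star a) + φ (star a))
          = (2^(n-2):ℕ) • ((φ (star a) - star (φ (star a))) + (φ (star a) + star (φ (star a)))) := by
            congr 1; abel
        _ = (2^(n-2):ℕ) • (φ (star a) - star (φ (star a)))
            + (2^(n-2):ℕ) • (φ (star a) + star (φ (star a))) := smul_add _ _ _
        _ = -((2^(n-2):ℕ) • (φ a - star (φ a))) + (2^(n-2):ℕ) • (φ a + star (φ a)) := by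
            rw [← hA, ← hB]
        _ = (2^(n-2):ℕ) • (-(φ a - star (φ a))) + (2^(n-2):ℕ) • (φ a + star (φ a)) := by
            rw [smul_neg]
        _ = (2^(n-2):ℕ) • (-(φ a - star (φ a)) + (φ a + star (φ a))) := (smul_add _ _ _).symm
        _ = (2^(n-2):ℕ) • (star (φ a) + star (φ a)) := by congr 1; abel
    exact add_self_cancel (nsmul_cancel hcn hsum)
  -- right multiplication by a self-adjoint element
  have right_mul : ∀ (a S : A), star S = S → φ (a * S) = φ a * φ S := by
    intro a S hS
    have hfS : star (φ S) = φ S := sa_pres S hS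
    have h1 := key_p1 (a * S)
    rw [star_mul, hS] at h1
    have h2 := key_p a S hS hfS
    have hsub : φ (a*S) - star (φ (a*S)) = φ a * φ S - φ S * star (φ a) :=
      nsmul_cancel hcn (by rw [← h1, h2])
    have h3 := key_q1 (a * S)
    rw [star_mul, hS] at h3
    have h4 := key_q a S hS hfS
    have hadd : φ (a*S) + star (φ (a*S)) = φ a * φ S + φ S * star (φ a) :=
      nsmul_cancel hcn (by rw [← h3, h4])
    have key : φ (a*S) + φ (a*S) = φ a * φ S + φ a * φ S := by
      calc φ (a*S) + φ (a*S)
          = (φ (a*S) - star (φ (a*S))) + (φ (a*S) + star (φ (a*S))) := by abel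
        _ = (φ a * φ S - φ S * star (φ a)) + (φ a * φ S + φ S * star (φ a)) := by
            rw [hsub, hadd]
        _ = φ a * φ S + φ a * φ S := by abel
    exact add_self_cancel key
  -- left multiplication by a self-adjoint element
  have left_mul : ∀ (a S : A), star S = S → φ (S * a) = φ S * φ a := by
    intro a S hS
    have hfS : star (φ S) = φ S := sa_pres S hS
    have h3 := key_q1 (S * a)
    rw [star_mul, hS] at h3
    have h4 := key_q (star a) S hS hfS
    simp only [star_pres a, star_star] at h4
    have hadd : φ (S*a) + star (φ (S*a)) = star (φ a) * φ S + φ S * φ a := by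
      refine nsmul_cancel hcn ?_
      rw [← h3, ← h4]
      congr 2
      rw [add_comm]
    have h1 := key_p1 (S * a)
    rw [star_mul, hS] at h1
    have h2 := key_p (star a) S hS hfS
    simp only [star_pres a, star_star] at h2
    have hskew2 : star ((2^(n-2):ℕ) • (S*a - star a * S)) = -((2^(n-2):ℕ) • (S*a - star a * S)) := by
      rw [starNsmul, ← smul_neg]
      congr 1
      rw [star_sub, star_mul, star_mul, hS, star_star]; abel
    have e3 : (2^(n-2):ℕ) • (star a * S - S * a) = -((2^(n-2):ℕ) • (S*a - star a * S)) := by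
      rw [← smul_neg]; congr 1; abel
    rw [e3, odd_skew _ hskew2, h1] at h2
    have hsub : φ (S*a) - star (φ (S*a)) = φ S * φ a - star (φ a) * φ S := by
      refine nsmul_cancel hcn ?_
      have h2' : (2^(n-2):ℕ) • (φ (S*a) - star (φ (S*a)))
          = -((2^(n-2):ℕ) • (star (φ a) * φ S - φ S * φ a)) := by
        rw [← h2, neg_neg]
      rw [h2', ← smul_neg]
      congr 1; abel
    have key : φ (S*a) + φ (S*a) = φ S * φ a + φ S * φ a := by
      calc φ (S*a) + φ (S*a)
          = (φ (S*a) - star (φ (S*a))) + (φ (S*a) + star (φ (S*a))) := by abel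
        _ = (φ S * φ a - star (φ a) * φ S) + (star (φ a) * φ S + φ S * φ a) := by
            rw [hsub, hadd]
        _ = φ S * φ a + φ S * φ a := by abel
    exact add_self_cancel key
  rcases hi with h | h
  · rw [h]
    exact ⟨right_mul a P hPsa, left_mul a P hPsa⟩
  · rw [h]
    have hsa : star (1 - P) = 1 - P := by rw [star_sub, star_one, hPsa]
    exact ⟨right_mul a _ hsa, left_mul a _ hsa⟩
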